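/- arXiv:1812.03098 — 2 statements merged into one kernel-verified Lean document; each statement's English description precedes it below -/
import Mathlib

section
/- Let Ω ⊂ ℝ² be an annulus {a < |x| < b} with 0 < a < b, let f : ℝ → ℝ be continuous, let α ≥ 0, β ≥ 0 and κ = (β+2)/(α+2). If u ∈ C²(Ω) is a radial solution of -Δu = |x|^α f(u) in Ω with u = 0 on ∂Ω, then v(y) := u(T_κ(y)) is a radial solution of -Δv = κ² |y|^β f(v) in Ω_κ := T_κ^{-1}(Ω), with v = 0 on ∂Ω_κ. -/
open Real Filter

/-- The transformation `T κ (y) = |y|^(κ-1) y` on `ℝ²` (with `T κ 0 = 0`). -/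
noncomputable def T (κ : ℝ) (y : EuclideanSpace ℝ (Fin 2)) : EuclideanSpace ℝ (Fin 2) :=
  (‖y‖ ^ (κ - 1) : ℝ) • y

/-- The Laplacian on `ℝ²` as the sum of the second directional derivatives. -/
noncomputable def lap (u : EuclideanSpace ℝ (Fin 2) → ℝ) (x : EuclideanSpace ℝ (Fin 2)) : ℝ :=
  ∑ i : Fin 2,
    fderiv ℝ (fun z => fderiv ℝ u z (EuclideanSpace.single i 1)) x (EuclideanSpace.single i 1)

local notation "E2" => EuclideanSpace ℝ (Fin 2)

lemma hasFDerivAt_norm' (x : E2) (hx : x ≠ 0) :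
    HasFDerivAt (fun z : E2 => ‖z‖) ((‖x‖⁻¹ : ℝ) • innerSL ℝ x) x := by
  have hne : ‖x‖ ≠ 0 := norm_ne_zero_iff.mpr hx
  have h1 : HasFDerivAt (fun z : E2 => ‖z‖ ^ 2) (2 • innerSL ℝ x) x :=
    (hasStrictFDerivAt_norm_sq x).hasFDerivAt
  have h2 : HasDerivAt (√·) (1 / (2 * √(‖x‖ ^ 2))) (‖x‖ ^ 2) :=
    Real.hasDerivAt_sqrt (by positivity)
  have h3 := h2.comp_hasFDerivAt x h1
  have hn : ((√·) ∘ fun z : E2 => ‖z‖ ^ 2) = fun z : E2 => ‖z‖ := by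
    funext z; simp [Function.comp, Real.sqrt_sq (norm_nonneg z)]
  rw [hn] at h3
  refine h3.congr_fderiv ?_
  rw [Real.sqrt_sq (norm_nonneg x)]
  ext e
  simp [two_smul]
  field_simp
  ring

lemma hasFDerivAt_radial (W : ℝ → ℝ) (x : E2) (hx : x ≠ 0)
    (hW : DifferentiableAt ℝ W ‖x‖) :
    HasFDerivAt (fun z : E2 => W ‖z‖) ((deriv W ‖x‖ * ‖x‖⁻¹) • innerSL ℝ x) x := by
  have h := (hW.hasDerivAt).comp_hasFDerivAt x (hasFDerivAt_norm' x hx)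
  refine h.congr_fderiv ?_
  ext e
  simp [mul_comm, mul_assoc, mul_left_comm]

lemma lap_eventuallyEq {u g : E2 → ℝ} {x : E2} (h : u =ᶠ[nhds x] g) : lap u x = lap g x := by
  unfold lap
  congr 1
  funext i
  have h1 : (fun z => fderiv ℝ u z (EuclideanSpace.single i 1)) =ᶠ[nhds x]
      (fun z => fderiv ℝ g z (EuclideanSpace.single i 1)) := by
    filter_upwards [h.eventually_nhds] with z hz
    rw [Filter.EventuallyEq.fderiv_eq hz]
  rw [h1.fderiv_eq]

lemma inner_single' (z : E2) (i : Fin 2) : (innerSL ℝ z) (EuclideanSpace.single i 1) = z i := by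
  simp [EuclideanSpace.inner_single_right]

lemma lap_radial (W : ℝ → ℝ) (s : Set ℝ) (hso : IsOpen s)
    (hW : ContDiffOn ℝ 2 W s) (x : E2) (hx : x ≠ 0) (hr : ‖x‖ ∈ s) :
    lap (fun z : E2 => W ‖z‖) x = deriv (deriv W) ‖x‖ + deriv W ‖x‖ / ‖x‖ := by
  set r := ‖x‖ with hrdef
  have hr0 : r ≠ 0 := norm_ne_zero_iff.mpr hx
  have hW' : ContDiffOn ℝ 1 (deriv W) s := hW.deriv_of_isOpen hso (by norm_num)
  have hWd : ∀ t ∈ s, DifferentiableAt ℝ W t := fun t ht =>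
    (hW.differentiableOn (by norm_num)).differentiableAt (hso.mem_nhds ht)
  have hW'd : DifferentiableAt ℝ (deriv W) r :=
    (hW'.differentiableOn (by norm_num)).differentiableAt (hso.mem_nhds hr)
  set s' : Set E2 := ((fun z : E2 => ‖z‖) ⁻¹' s) ∩ {z : E2 | z ≠ 0} with hs'def
  have hs'o : IsOpen s' := ((hso.preimage continuous_norm)).inter isOpen_ne
  have hxs' : x ∈ s' := ⟨hr, hx⟩
  set Q : ℝ → ℝ := fun t => deriv W t * t⁻¹ with hQdef
  have hQd : DifferentiableAt ℝ Q r := hW'd.mul (differentiableAt_inv hr0)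
  have hQderiv : deriv Q r = deriv (deriv W) r * r⁻¹ + deriv W r * (-(r ^ 2)⁻¹) :=
    (hW'd.hasDerivAt.mul (hasDerivAt_inv hr0)).deriv
  have hfirst : ∀ z ∈ s', ∀ i : Fin 2,
      fderiv ℝ (fun z : E2 => W ‖z‖) z (EuclideanSpace.single i 1) = Q ‖z‖ * z i := by
    intro z hz i
    rw [(hasFDerivAt_radial W z hz.2 (hWd _ hz.1)).fderiv]
    simp only [ContinuousLinearMap.coe_smul', Pi.smul_apply, inner_single', smul_eq_mul, hQdef]
  have hlap : ∀ i : Fin 2,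
      fderiv ℝ (fun z => fderiv ℝ (fun z : E2 => W ‖z‖) z (EuclideanSpace.single i 1)) x
        (EuclideanSpace.single i 1) = Q r + deriv Q r * r⁻¹ * (x i) ^ 2 := by
    intro i
    have heq : (fun z => fderiv ℝ (fun z : E2 => W ‖z‖) z (EuclideanSpace.single i 1))
        =ᶠ[nhds x] (fun z : E2 => Q ‖z‖ * z i) := by
      filter_upwards [hs'o.mem_nhds hxs'] with z hz using hfirst z hz i
    rw [heq.fderiv_eq]
    have hQ' : HasFDerivAt (fun z : E2 => Q ‖z‖) ((deriv Q r * r⁻¹) • innerSL ℝ x) x :=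
      hasFDerivAt_radial Q x hx hQd
    have hproj : HasFDerivAt (fun z : E2 => z i) (EuclideanSpace.proj i : E2 →L[ℝ] ℝ) x :=
      (EuclideanSpace.proj i : E2 →L[ℝ] ℝ).hasFDerivAt
    rw [HasFDerivAt.fderiv (f := fun z : E2 => Q ‖z‖ * z i) (hQ'.mul hproj)]
    simp only [ContinuousLinearMap.add_apply, ContinuousLinearMap.coe_smul', Pi.smul_apply,
      inner_single', smul_eq_mul, PiLp.proj_apply, EuclideanSpace.single_apply]
    simp
    ring
  unfold lap
  simp only [hlap]
  have hsum : ∑ i : Fin 2, (x i) ^ 2 = r ^ 2 := by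
    rw [hrdef, EuclideanSpace.norm_eq, Real.sq_sqrt (by positivity)]
    simp [sq_abs]
  have hsum2 : x 0 ^ 2 + x 1 ^ 2 = r ^ 2 := by
    rw [← hsum, Fin.sum_univ_two]
  rw [Fin.sum_univ_two]
  have hc : Q r + deriv Q r * r⁻¹ * x 0 ^ 2 + (Q r + deriv Q r * r⁻¹ * x 1 ^ 2)
      = 2 * Q r + deriv Q r * r⁻¹ * r ^ 2 := by rw [← hsum2]; ring
  rw [hc, hQderiv]
  show 2 * (deriv W r * r⁻¹) + _ = _
  field_simp
  ring

/-- If `u` is a radial solution of `-Δu = |x|^α f(u)` in the annulus `Ω = {a < |x| < b}`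
with `u = 0` on `∂Ω`, then `v = u ∘ T κ`, with `κ = (β+2)/(α+2)`, is a radial solution of
`-Δv = κ² |y|^β f(v)` in `Ω_κ = T κ ⁻¹' Ω`, with `v = 0` on `∂Ω_κ`. -/
theorem stmt6 (a b : ℝ) (ha : 0 < a) (hab : a < b) (f : ℝ → ℝ) (hf : Continuous f)
    (α β : ℝ) (hα : 0 ≤ α) (hβ : 0 ≤ β) (κ : ℝ) (hκ : κ = (β + 2) / (α + 2))
    (Ω : Set (EuclideanSpace ℝ (Fin 2))) (hΩ : Ω = {x | a < ‖x‖ ∧ ‖x‖ < b})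
    (u : EuclideanSpace ℝ (Fin 2) → ℝ)
    (hreg : ContDiffOn ℝ 2 u Ω)
    (hrad : ∃ U : ℝ → ℝ, ∀ x ∈ Ω, u x = U ‖x‖)
    (hpde : ∀ x ∈ Ω, -lap u x = ‖x‖ ^ α * f (u x))
    (hbd : ∀ x : EuclideanSpace ℝ (Fin 2), ‖x‖ = a ∨ ‖x‖ = b → u x = 0) :
    (∃ V : ℝ → ℝ, ∀ y ∈ T κ ⁻¹' Ω, (u ∘ T κ) y = V ‖y‖) ∧
    (∀ y ∈ T κ ⁻¹' Ω, -lap (u ∘ T κ) y = κ ^ 2 * ‖y‖ ^ β * f ((u ∘ T κ) y)) ∧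
    (∀ y : EuclideanSpace ℝ (Fin 2), ‖y‖ = a ^ (1 / κ) ∨ ‖y‖ = b ^ (1 / κ) →
      (u ∘ T κ) y = 0) := by
  have hκpos : 0 < κ := by rw [hκ]; positivity
  have hκ0 : κ ≠ 0 := ne_of_gt hκpos
  have hκab : κ * (α + 2) = β + 2 := by
    rw [hκ]; field_simp
  -- norm of T κ y
  have hTnorm : ∀ y : E2, y ≠ 0 → ‖T κ y‖ = ‖y‖ ^ κ := by
    intro y hy
    have h0 : (0:ℝ) < ‖y‖ := norm_pos_iff.mpr hy
    rw [T, norm_smul, Real.norm_eq_abs, abs_of_nonneg (Real.rpow_nonneg h0.le _)]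
    rw [show κ = (κ - 1) + 1 by ring, Real.rpow_add_one h0.ne']
    norm_num
  have hT0 : T κ (0 : E2) = 0 := by simp [T]
  -- rpow comparison helpers
  have hcomp : ∀ c r : ℝ, 0 < c → 0 < r → (c < r ^ κ ↔ c ^ (1/κ) < r) := by
    intro c r hc hr
    rw [show c = (c ^ (1/κ)) ^ κ by
      rw [← Real.rpow_mul hc.le, one_div, inv_mul_cancel₀ hκ0, Real.rpow_one]]
    rw [Real.rpow_lt_rpow_iff (by positivity) hr.le hκpos]
    rw [← Real.rpow_mul hc.le, one_div, inv_mul_cancel₀ hκ0, Real.rpow_one]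
  have hcomp' : ∀ c r : ℝ, 0 < c → 0 < r → (r ^ κ < c ↔ r < c ^ (1/κ)) := by
    intro c r hc hr
    rw [show c = (c ^ (1/κ)) ^ κ by
      rw [← Real.rpow_mul hc.le, one_div, inv_mul_cancel₀ hκ0, Real.rpow_one]]
    rw [Real.rpow_lt_rpow_iff hr.le (by positivity) hκpos]
    rw [← Real.rpow_mul hc.le, one_div, inv_mul_cancel₀ hκ0, Real.rpow_one]
  have hA : (0:ℝ) < a ^ (1/κ) := Real.rpow_pos_of_pos ha _
  have hB : (0:ℝ) < b ^ (1/κ) := Real.rpow_pos_of_pos (ha.trans hab) _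
  -- preimage characterization
  have hpre : T κ ⁻¹' Ω = {y : E2 | a ^ (1/κ) < ‖y‖ ∧ ‖y‖ < b ^ (1/κ)} := by
    ext y
    simp only [Set.mem_preimage, hΩ, Set.mem_setOf_eq]
    by_cases hy : y = 0
    · subst hy
      simp only [hT0, norm_zero]
      constructor
      · rintro ⟨h1, _⟩; exact absurd h1 (by linarith)
      · rintro ⟨h1, _⟩; exact absurd h1 (by linarith)
    · have h0 : (0:ℝ) < ‖y‖ := norm_pos_iff.mpr hy
      rw [hTnorm y hy, hcomp a ‖y‖ ha h0, hcomp' b ‖y‖ (ha.trans hab) h0]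
  have hpreo : IsOpen (T κ ⁻¹' Ω) := by
    rw [hpre]
    exact (isOpen_Ioo.preimage continuous_norm : IsOpen ((fun y : E2 => ‖y‖) ⁻¹' Set.Ioo _ _))
  -- basic setup for U₀
  set e₀ : E2 := EuclideanSpace.single (0 : Fin 2) (1:ℝ) with he₀def
  have he₀ : ‖e₀‖ = 1 := by simp [he₀def]
  obtain ⟨U, hU⟩ := hrad
  set U₀ : ℝ → ℝ := fun r => u (r • e₀) with hU₀def
  have hmem : ∀ r : ℝ, 0 ≤ r → ‖(r • e₀ : E2)‖ = r := by
    intro r hr; rw [norm_smul, he₀, mul_one, Real.norm_eq_abs, abs_of_nonneg hr]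
  have hΩo : IsOpen Ω := by
    rw [hΩ]
    exact (isOpen_Ioo.preimage continuous_norm : IsOpen ((fun y : E2 => ‖y‖) ⁻¹' Set.Ioo a b))
  have hu_eq : ∀ x ∈ Ω, u x = U₀ ‖x‖ := by
    intro x hx
    have hxn : 0 ≤ ‖x‖ := norm_nonneg x
    have h1 : (‖x‖ • e₀ : E2) ∈ Ω := by
      rw [hΩ] at hx ⊢
      rw [Set.mem_setOf_eq, hmem _ hxn]
      exact hx
    rw [hU x hx, hU₀def]
    simp only
    rw [hU _ h1, hmem _ hxn]
  have hU₀reg : ContDiffOn ℝ 2 U₀ (Set.Ioo a b) := by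
    have hline : ContDiff ℝ 2 (fun r : ℝ => (r • e₀ : E2)) := contDiff_id.smul contDiff_const
    have hmaps : Set.MapsTo (fun r : ℝ => (r • e₀ : E2)) (Set.Ioo a b) Ω := by
      intro r hr
      rw [hΩ, Set.mem_setOf_eq, hmem r (le_of_lt (ha.trans hr.1))]
      exact ⟨hr.1, hr.2⟩
    exact hreg.comp hline.contDiffOn hmaps
  -- the radial ODE for U₀
  have hODE : ∀ s ∈ Set.Ioo a b,
      -(deriv (deriv U₀) s + deriv U₀ s / s) = s ^ α * f (U₀ s) := by
    intro s hs
    have hs0 : (0:ℝ) < s := ha.trans hs.1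
    have hxn : ‖(s • e₀ : E2)‖ = s := hmem s hs0.le
    have hxΩ : (s • e₀ : E2) ∈ Ω := by
      rw [hΩ, Set.mem_setOf_eq, hxn]; exact ⟨hs.1, hs.2⟩
    have hx0 : (s • e₀ : E2) ≠ 0 := by
      intro h; rw [h, norm_zero] at hxn; exact hs0.ne' hxn.symm
    have hev : u =ᶠ[nhds (s • e₀ : E2)] fun z => U₀ ‖z‖ := by
      filter_upwards [hΩo.mem_nhds hxΩ] with z hz using hu_eq z hz
    have h1 := hpde _ hxΩ
    rw [lap_eventuallyEq hev,
      lap_radial U₀ (Set.Ioo a b) isOpen_Ioo hU₀reg _ hx0 (by rw [hxn]; exact hs),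
      hxn, hu_eq _ hxΩ, hxn] at h1
    exact h1
  -- the transformed radial profile
  set W : ℝ → ℝ := fun t => U₀ (t ^ κ) with hWdef
  set I : Set ℝ := Set.Ioo (a ^ (1/κ)) (b ^ (1/κ)) with hIdef
  have hIo : IsOpen I := isOpen_Ioo
  have hImaps : ∀ t ∈ I, t ^ κ ∈ Set.Ioo a b := by
    intro t ht
    have ht0 : (0:ℝ) < t := hA.trans ht.1
    exact ⟨(hcomp a t ha ht0).mpr ht.1, (hcomp' b t (ha.trans hab) ht0).mpr ht.2⟩
  have hWreg : ContDiffOn ℝ 2 W I := by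
    apply hU₀reg.comp (fun t ht => ?_) (fun t ht => hImaps t ht)
    exact (Real.contDiffAt_rpow_const_of_ne (ne_of_gt (hA.trans ht.1))).contDiffWithinAt
  -- v agrees with W ∘ norm on the preimage
  have hveq : ∀ y ∈ T κ ⁻¹' Ω, (u ∘ T κ) y = W ‖y‖ := by
    intro y hy
    have hy' : y ∈ {y : E2 | a ^ (1/κ) < ‖y‖ ∧ ‖y‖ < b ^ (1/κ)} := by rw [← hpre]; exact hy
    obtain ⟨hy1, hy2⟩ := hy'
    have hy0 : y ≠ 0 := by
      intro h; rw [h, norm_zero] at hy1; linarith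
    rw [Function.comp_apply, hu_eq _ hy, hTnorm y hy0]
  refine ⟨⟨W, hveq⟩, ?_, ?_⟩
  · -- the PDE
    intro y hy
    have hy' : y ∈ {y : E2 | a ^ (1/κ) < ‖y‖ ∧ ‖y‖ < b ^ (1/κ)} := by rw [← hpre]; exact hy
    obtain ⟨hy1, hy2⟩ := hy'
    set r := ‖y‖ with hrdef
    have hr0 : (0:ℝ) < r := hA.trans hy1
    have hy0 : y ≠ 0 := norm_pos_iff.mp hr0
    have hrI : r ∈ I := ⟨hy1, hy2⟩
    set s : ℝ := r ^ κ with hsdef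
    have hs0 : (0:ℝ) < s := Real.rpow_pos_of_pos hr0 _
    have hsab : s ∈ Set.Ioo a b := hImaps r hrI
    -- differentiability facts for U₀
    have hU₀' : ContDiffOn ℝ 1 (deriv U₀) (Set.Ioo a b) :=
      hU₀reg.deriv_of_isOpen isOpen_Ioo (by norm_num)
    have hU₀d : ∀ t ∈ Set.Ioo a b, DifferentiableAt ℝ U₀ t := fun t ht =>
      (hU₀reg.differentiableOn (by norm_num)).differentiableAt (isOpen_Ioo.mem_nhds ht)
    have hU₀'d : DifferentiableAt ℝ (deriv U₀) s :=
      (hU₀'.differentiableOn (by norm_num)).differentiableAt (isOpen_Ioo.mem_nhds hsab)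
    -- first derivative of W on I
    have hWderiv : ∀ t ∈ I, deriv W t = deriv U₀ (t ^ κ) * (κ * t ^ (κ - 1)) := by
      intro t ht
      have ht0 : (0:ℝ) < t := hA.trans ht.1
      have hrp : HasDerivAt (fun t : ℝ => t ^ κ) (κ * t ^ (κ - 1)) t :=
        Real.hasDerivAt_rpow_const (Or.inl ht0.ne')
      exact (HasDerivAt.comp t ((hU₀d _ (hImaps t ht)).hasDerivAt) hrp).deriv
    -- second derivative of W at r
    have hrp : HasDerivAt (fun t : ℝ => t ^ κ) (κ * r ^ (κ - 1)) r :=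
      Real.hasDerivAt_rpow_const (Or.inl hr0.ne')
    have h1 : HasDerivAt (fun t : ℝ => deriv U₀ (t ^ κ))
        (deriv (deriv U₀) s * (κ * r ^ (κ - 1))) r := by
      have := HasDerivAt.comp r (hU₀'d.hasDerivAt) hrp
      exact this
    have h2 : HasDerivAt (fun t : ℝ => κ * t ^ (κ - 1)) (κ * ((κ - 1) * r ^ (κ - 1 - 1))) r :=
      (Real.hasDerivAt_rpow_const (Or.inl hr0.ne')).const_mul κ
    have hF : HasDerivAt (fun t : ℝ => deriv U₀ (t ^ κ) * (κ * t ^ (κ - 1)))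
        (deriv (deriv U₀) s * (κ * r ^ (κ - 1)) * (κ * r ^ (κ - 1)) +
          deriv U₀ (r ^ κ) * (κ * ((κ - 1) * r ^ (κ - 1 - 1)))) r := h1.mul h2
    have hW'' : deriv (deriv W) r =
        deriv (deriv U₀) s * (κ * r ^ (κ - 1)) * (κ * r ^ (κ - 1)) +
          deriv U₀ s * (κ * ((κ - 1) * r ^ (κ - 1 - 1))) := by
      have hev : deriv W =ᶠ[nhds r] fun t => deriv U₀ (t ^ κ) * (κ * t ^ (κ - 1)) := by
        filter_upwards [hIo.mem_nhds hrI] with t ht using hWderiv t ht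
      rw [hev.deriv_eq, hF.deriv, ← hsdef]
    -- apply lap_radial to v
    have hevv : (u ∘ T κ) =ᶠ[nhds y] fun z => W ‖z‖ := by
      filter_upwards [hpreo.mem_nhds hy] with z hz using hveq z hz
    have hlapv : lap (u ∘ T κ) y = deriv (deriv W) r + deriv W r / r := by
      rw [lap_eventuallyEq hevv, lap_radial W I hIo hWreg y hy0 hrI]
    -- algebra
    have hE2 : r ^ (κ - 1) = r ^ (κ - 2) * r := by
      rw [← Real.rpow_add_one hr0.ne']; congr 1; ring
    have hE5 : s = r ^ (κ - 2) * r * r := by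
      rw [hsdef, ← Real.rpow_add_one hr0.ne', ← Real.rpow_add_one hr0.ne']
      congr 1; ring
    have hE3 : r ^ (κ - 1 - 1) = r ^ (κ - 2) := by congr 1; ring
    have alg : ∀ A B : ℝ,
        (A * (κ * r ^ (κ - 1)) * (κ * r ^ (κ - 1)) + B * (κ * ((κ - 1) * r ^ (κ - 2)))) +
          B * (κ * r ^ (κ - 1)) / r = κ ^ 2 * r ^ (κ - 2) * (s * A + B) := by
      intro A B
      rw [hE2, hE5]
      field_simp
      ring
    have hkey : lap (u ∘ T κ) y =
        κ ^ 2 * r ^ (κ - 2) * (s * deriv (deriv U₀) s + deriv U₀ s) := by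
      rw [hlapv, hW'', hWderiv r hrI, ← hsdef, hE3]
      exact alg _ _
    -- use the ODE
    have hODEs := hODE s hsab
    have h4 : s ^ (α + 1) = s ^ α * s := Real.rpow_add_one hs0.ne' α
    have h5 : deriv U₀ s / s * s = deriv U₀ s := div_mul_cancel₀ _ hs0.ne'
    have hODEs' : s * deriv (deriv U₀) s + deriv U₀ s = -(s ^ (α + 1) * f (U₀ s)) := by
      linear_combination (-s) * hODEs + f (U₀ s) * h4 + (-1 : ℝ) * h5
    have hval : (u ∘ T κ) y = U₀ s := by rw [hveq y hy]
    have hpow : r ^ (κ - 2) * s ^ (α + 1) = r ^ β := by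
      rw [hsdef, ← Real.rpow_mul hr0.le, ← Real.rpow_add hr0]
      congr 1
      linear_combination hκab
    rw [hval, hkey, hODEs']
    calc -(κ ^ 2 * r ^ (κ - 2) * -(s ^ (α + 1) * f (U₀ s)))
        = κ ^ 2 * (r ^ (κ - 2) * s ^ (α + 1)) * f (U₀ s) := by ring
      _ = κ ^ 2 * r ^ β * f (U₀ s) := by rw [hpow]
  · -- boundary
    intro y hy
    have hy0 : y ≠ 0 := by
      intro h
      rw [h, norm_zero] at hy
      rcases hy with h1 | h1
      · exact hA.ne h1
      · exact hB.ne h1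
    rw [Function.comp_apply]
    apply hbd
    rw [hTnorm y hy0]
    rcases hy with h1 | h1
    · left
      rw [h1, ← Real.rpow_mul ha.le, one_div, inv_mul_cancel₀ hκ0, Real.rpow_one]
    · right
      rw [h1, ← Real.rpow_mul (ha.trans hab).le, one_div, inv_mul_cancel₀ hκ0, Real.rpow_one]
end

section
/- Let Ω ⊂ ℝ² be either a ball or annulus centered at the origin, κ > 0, and Ω_κ = T_κ^{-1}(Ω). For ψ ∈ C^∞_c(Ω_κ \ {0}) and φ = ψ ∘ T_κ^{-1}, one has min{κ, 1/κ} ∫_Ω |∇φ|² dx ≤ ∫_{Ω_κ} |∇ψ|² dy ≤ max{κ, 1/κ} ∫_Ω |∇φ|² dx. -/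
open MeasureTheory

notation "E2" => EuclideanSpace ℝ (Fin 2)

lemma T_zero (κ : ℝ) : T κ (0 : E2) = 0 := by simp [T]

lemma norm_T (κ : ℝ) (hκ : 0 < κ) (y : E2) : ‖T κ y‖ = ‖y‖ ^ κ := by
  rcases eq_or_ne y 0 with rfl | hy
  · simp [T, Real.zero_rpow (ne_of_gt hκ)]
  · have hy' : (0:ℝ) < ‖y‖ := norm_pos_iff.2 hy
    rw [T, norm_smul, Real.norm_eq_abs, abs_of_nonneg (Real.rpow_nonneg (norm_nonneg y) _),
      ← Real.rpow_add_one hy'.ne']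
    norm_num

lemma T_T (κ κ' : ℝ) (hκ : 0 < κ) (y : E2) : T κ' (T κ y) = T (κ' * κ) y := by
  rcases eq_or_ne y 0 with rfl | hy
  · simp [T]
  · have hy' : (0:ℝ) < ‖y‖ := norm_pos_iff.2 hy
    have h1 : ‖T κ y‖ = ‖y‖ ^ κ := norm_T κ hκ y
    rw [show T κ' (T κ y) = (‖T κ y‖ ^ (κ' - 1) : ℝ) • T κ y from rfl, h1, T, T, smul_smul,
      ← Real.rpow_mul (norm_nonneg y), ← Real.rpow_add hy']
    ring_nf

lemma T_inv (κ : ℝ) (hκ : 0 < κ) (y : E2) : T (1/κ) (T κ y) = y := by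
  rw [T_T κ (1/κ) hκ, one_div, inv_mul_cancel₀ (ne_of_gt hκ)]
  rcases eq_or_ne y 0 with rfl | hy
  · simp [T]
  · have hy' : (0:ℝ) < ‖y‖ := norm_pos_iff.2 hy
    rw [T]; norm_num

lemma T_injective (κ : ℝ) (hκ : 0 < κ) : Function.Injective (T κ) :=
  Function.LeftInverse.injective (T_inv κ hκ)

lemma T_surjective (κ : ℝ) (hκ : 0 < κ) : Function.Surjective (T κ) := by
  intro x
  refine ⟨T (1/κ) x, ?_⟩
  have := T_inv (1/κ) (by positivity) x
  rwa [show (1:ℝ)/(1/κ) = κ by field_simp] at this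

open RealInnerProductSpace in
noncomputable def Amap (c : ℝ) (y : E2) : E2 →L[ℝ] E2 :=
  (‖y‖ ^ (c-1) : ℝ) • ContinuousLinearMap.id ℝ E2 +
  ((c-1) * ‖y‖ ^ (c-3)) • ((innerSL ℝ y).smulRight y)

open RealInnerProductSpace in
lemma Amap_apply (c : ℝ) (y h : E2) :
    Amap c y h = (‖y‖^(c-1) : ℝ) • h + ((c-1) * ‖y‖^(c-3) * ⟪y,h⟫) • y := by
  simp [Amap, mul_smul, ContinuousLinearMap.smul_apply]

open RealInnerProductSpace in
lemma inner_rpow_eq (q : ℝ) (z : E2) : (⟪z,z⟫ : ℝ) ^ (q/2) = ‖z‖ ^ q := by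
  rw [real_inner_self_eq_norm_sq, ← Real.rpow_natCast ‖z‖ 2, ← Real.rpow_mul (norm_nonneg z)]
  norm_num
  rw [mul_div_cancel₀]
  norm_num

open RealInnerProductSpace in
lemma hasFDerivAt_T (c : ℝ) (y : E2) (hy : y ≠ 0) : HasFDerivAt (T c) (Amap c y) y := by
  have hy' : (0:ℝ) < ‖y‖ := norm_pos_iff.2 hy
  have hyy : (0:ℝ) < ⟪y,y⟫ := by rw [real_inner_self_eq_norm_sq]; positivity
  have hInner : HasFDerivAt (fun z : E2 => ⟪z,z⟫)
      ((fderivInnerCLM ℝ ((id y : E2), (id y : E2))).comp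
        ((ContinuousLinearMap.id ℝ E2).prod (ContinuousLinearMap.id ℝ E2))) y :=
    (hasFDerivAt_id y).inner ℝ (hasFDerivAt_id y)
  have hrpow : HasDerivAt (fun u : ℝ => u ^ ((c-1)/2)) (((c-1)/2) * ⟪y,y⟫ ^ ((c-1)/2-1)) ⟪y,y⟫ :=
    Real.hasDerivAt_rpow_const (Or.inl (ne_of_gt hyy))
  have hscal : HasFDerivAt (fun z : E2 => (⟪z,z⟫ : ℝ) ^ ((c-1)/2))
      ((((c-1)/2) * ⟪y,y⟫ ^ ((c-1)/2-1)) • ((fderivInnerCLM ℝ ((id y : E2), (id y : E2))).comp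
        ((ContinuousLinearMap.id ℝ E2).prod (ContinuousLinearMap.id ℝ E2)))) y :=
    HasDerivAt.comp_hasFDerivAt (f := fun z : E2 => (⟪z,z⟫ : ℝ)) y hrpow hInner
  have hT := hscal.smul (hasFDerivAt_id y)
  have hfun : (fun z : E2 => (⟪z,z⟫ : ℝ) ^ ((c-1)/2) • z) = T c := by
    funext z
    rw [inner_rpow_eq (c-1) z, T]
  simp only [id_eq] at hT
  rw [show ((fun z : E2 => (⟪z,z⟫ : ℝ) ^ ((c-1)/2)) • id) = T c from hfun] at hT
  refine hT.congr_fderiv (Eq.symm ?_)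
  refine ContinuousLinearMap.ext fun h => ?_
  rw [Amap_apply]
  have h1 : (⟪y,y⟫ : ℝ) ^ ((c-1)/2) = ‖y‖ ^ (c-1) := inner_rpow_eq (c-1) y
  have h2 : (⟪y,y⟫ : ℝ) ^ ((c-1)/2-1) = ‖y‖ ^ (c-3) := by
    rw [show (c-1)/2-1 = (c-3)/2 by ring, inner_rpow_eq (c-3) y]
  simp only [ContinuousLinearMap.add_apply, ContinuousLinearMap.smul_apply,
    ContinuousLinearMap.id_apply, ContinuousLinearMap.smulRight_apply,
    ContinuousLinearMap.coe_comp', Function.comp_apply, ContinuousLinearMap.prod_apply,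
    fderivInnerCLM_apply, h1, h2, smul_eq_mul, id]
  rw [real_inner_comm h y]
  match_scalars <;> ring

lemma det_eig (b : Module.Basis (Fin 2) ℝ E2) (f : E2 →ₗ[ℝ] E2) (d : Fin 2 → ℝ)
    (h : ∀ i, f (b i) = d i • b i) : LinearMap.det f = d 0 * d 1 := by
  rw [← LinearMap.det_toMatrix b]
  have hm : LinearMap.toMatrix b b f = Matrix.diagonal d := by
    ext i j
    rw [LinearMap.toMatrix_apply, h j, _root_.map_smul, Module.Basis.repr_self]
    simp [Matrix.diagonal, Finsupp.single_apply]
    rcases eq_or_ne i j with rfl | hij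
    · simp
    · simp [hij, Ne.symm hij]
  rw [hm, Matrix.det_diagonal, Fin.prod_univ_two]

open RealInnerProductSpace in
lemma det_Amap (c : ℝ) (y : E2) (hy : y ≠ 0) :
    (Amap c y).det = c * ‖y‖ ^ (2*c - 2) := by
  classical
  have hy' : (0:ℝ) < ‖y‖ := norm_pos_iff.2 hy
  set z : E2 := (WithLp.equiv 2 (∀ _ : Fin 2, ℝ)).symm ![-(y 1), y 0] with hz
  have hz0 : z 0 = -(y 1) := rfl
  have hz1 : z 1 = y 0 := rfl
  have hinner : ⟪y, z⟫ = 0 := by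
    simp [PiLp.inner_apply, Fin.sum_univ_two, hz0, hz1, RCLike.inner_apply]
    ring
  have hzne : z ≠ 0 := by
    intro hzz
    apply hy
    have h0 : y 1 = 0 := by have := congrArg (fun w : E2 => w 0) hzz; simpa [hz0] using this
    have h1 : y 0 = 0 := by have := congrArg (fun w : E2 => w 1) hzz; simpa [hz1] using this
    ext i
    fin_cases i <;> simp [h0, h1]
  have hli : LinearIndependent ℝ ![y, z] := by
    rw [LinearIndependent.pair_iff' hy]
    intro a haz
    apply hzne
    have : ⟪y, a • y⟫ = 0 := by rw [haz]; exact hinner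
    rw [real_inner_smul_right, real_inner_self_eq_norm_sq] at this
    have ha : a = 0 := by
      rcases mul_eq_zero.1 this with h | h
      · exact h
      · exact absurd h (by positivity)
    rw [← haz, ha, zero_smul]
  have hcard : Fintype.card (Fin 2) = Module.finrank ℝ E2 := by
    simp [finrank_euclideanSpace_fin]
  let b : Module.Basis (Fin 2) ℝ E2 := basisOfLinearIndependentOfCardEqFinrank hli hcard
  have hb : ∀ i, b i = ![y, z] i := fun i => by
    rw [show b = basisOfLinearIndependentOfCardEqFinrank hli hcard from rfl,
      coe_basisOfLinearIndependentOfCardEqFinrank]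
  have hb0 : b 0 = y := by rw [hb 0]; rfl
  have hb1 : b 1 = z := by rw [hb 1]; rfl
  have key : ∀ i, (Amap c y : E2 →ₗ[ℝ] E2) (b i)
      = (![c * ‖y‖^(c-1), ‖y‖^(c-1)] : Fin 2 → ℝ) i • b i := by
    intro i
    fin_cases i
    · show Amap c y (b 0) = (c * ‖y‖^(c-1)) • b 0
      rw [hb0, Amap_apply, real_inner_self_eq_norm_sq]
      have : ‖y‖ ^ (c-3) * ‖y‖ ^ 2 = ‖y‖ ^ (c-1) := by
        rw [← Real.rpow_natCast ‖y‖ 2, ← Real.rpow_add hy']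
        norm_num
        ring_nf
      have h3 : (c-1)*‖y‖^(c-3)*‖y‖^2 = (c-1)*‖y‖^(c-1) := by rw [mul_assoc, this]
      rw [h3, ← add_smul]
      congr 1
      ring
    · show Amap c y (b 1) = (‖y‖^(c-1)) • b 1
      rw [hb1, Amap_apply, hinner]
      simp
  have := det_eig b (Amap c y : E2 →ₗ[ℝ] E2) _ key
  rw [ContinuousLinearMap.det, this]
  show c * ‖y‖^(c-1) * ‖y‖^(c-1) = _
  rw [mul_assoc, ← Real.rpow_add hy']
  ring_nf

open RealInnerProductSpace in
lemma Amap_selfAdjoint (c : ℝ) (y v h : E2) : ⟪Amap c y v, h⟫ = ⟪v, Amap c y h⟫ := by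
  rw [Amap_apply, Amap_apply]
  simp [inner_add_left, inner_add_right, real_inner_smul_left, real_inner_smul_right,
    PiLp.inner_apply, Fin.sum_univ_two, RCLike.inner_apply]
  ring

open RealInnerProductSpace in
lemma inner_gradient (f : E2 → ℝ) (y h : E2) : ⟪gradient f y, h⟫ = fderiv ℝ f y h := by
  rw [gradient, ← InnerProductSpace.toDual_apply_apply, LinearIsometryEquiv.apply_symm_apply]

open RealInnerProductSpace in
lemma hasGradientAt_comp (κ : ℝ) (hκ : 0 < κ) (ψ : E2 → ℝ) (hψ : ContDiff ℝ (⊤ : ℕ∞) ψ)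
    (x : E2) (hx : x ≠ 0) :
    HasGradientAt (ψ ∘ T (1/κ)) (Amap (1/κ) x (gradient ψ (T (1/κ) x))) x := by
  set y := T (1/κ) x with hy
  have hD : HasFDerivAt ψ (fderiv ℝ ψ y) y :=
    (hψ.differentiable (by simp) y).hasFDerivAt
  have hchain : HasFDerivAt (ψ ∘ T (1/κ)) ((fderiv ℝ ψ y).comp (Amap (1/κ) x)) x :=
    hD.comp x (hasFDerivAt_T (1/κ) x hx)
  have hveq : (fderiv ℝ ψ y).comp (Amap (1/κ) x)
      = InnerProductSpace.toDual ℝ E2 (Amap (1/κ) x (gradient ψ y)) := by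
    ext h
    rw [ContinuousLinearMap.comp_apply, InnerProductSpace.toDual_apply_apply,
      Amap_selfAdjoint, inner_gradient]
  have := hchain.hasGradientAt
  rw [hveq, LinearIsometryEquiv.symm_apply_apply] at this
  exact this

open RealInnerProductSpace in
lemma key_identity (κ : ℝ) (hκ : 0 < κ) (y : E2) (hy : y ≠ 0) (v : E2) :
    |(Amap κ y).det| * ‖Amap (1/κ) (T κ y) v‖^2
      = κ * ‖v‖^2 + (1/κ - κ) * (⟪y,v⟫^2 / ‖y‖^2) := by
  have hr : (0:ℝ) < ‖y‖ := norm_pos_iff.2 hy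
  set r := ‖y‖ with hrdef
  set u := r ^ κ with hudef
  have hu : 0 < u := Real.rpow_pos_of_pos hr κ
  set t := (⟪y,v⟫ : ℝ) with htdef
  have hA : r^(1-κ) = r/u := by
    rw [Real.rpow_sub hr, Real.rpow_one]
  have hC : r^(2*κ-2) = u^2/r^2 := by
    rw [Real.rpow_sub hr, show (2:ℝ)*κ = κ*2 by ring, Real.rpow_mul hr.le,
      ← Real.rpow_natCast (r^κ) 2, ← Real.rpow_natCast r 2]
    norm_num
  have hnormT : ‖T κ y‖ = u := norm_T κ hκ y
  have hTdef : T κ y = (r^(κ-1)) • y := rfl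
  have hD2 : r^(κ-1) = u/r := by rw [Real.rpow_sub hr, Real.rpow_one]
  have hinnerT : (⟪T κ y, v⟫ : ℝ) = (u/r) * t := by
    rw [hTdef, real_inner_smul_left, hD2]
  have hApply : Amap (1/κ) (T κ y) v
      = (r/u) • v + ((1/κ-1) * (1/(r*u)) * t) • y := by
    rw [Amap_apply, hnormT, hinnerT, hTdef, smul_smul]
    have e1 : u^(1/κ-1) = r/u := by
      rw [hudef, ← Real.rpow_mul hr.le, show κ*(1/κ-1) = 1-κ by
        field_simp, hA]
    have e2 : u^(1/κ-3) = r/u^3 := by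
      rw [hudef, ← Real.rpow_mul hr.le, show κ*(1/κ-3) = 1-3*κ by
        field_simp, Real.rpow_sub hr, Real.rpow_one,
        show (3:ℝ)*κ = κ*3 by ring, Real.rpow_mul hr.le,
        ← Real.rpow_natCast (r^κ) 3]
      norm_num
    rw [e1, e2]
    congr 1
    congr 1
    rw [hD2]
    field_simp
  have hdet : |(Amap κ y).det| = κ * (u^2/r^2) := by
    rw [det_Amap κ y hy, hC, abs_of_nonneg (by positivity)]
  rw [hdet, hApply, norm_add_sq_real, real_inner_smul_left, real_inner_smul_right,
    norm_smul, norm_smul]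
  rw [show (⟪v, y⟫ : ℝ) = t from real_inner_comm y v]
  rw [Real.norm_eq_abs, Real.norm_eq_abs, ← hrdef,
    abs_of_nonneg (by positivity : (0:ℝ) ≤ r/u), mul_pow, mul_pow, sq_abs]
  field_simp
  ring


set_option maxHeartbeats 2000000 in
open RealInnerProductSpace in
/-- Comparison of Dirichlet integrals under the change of variables `T κ`: for
`ψ ∈ C_c^∞(Ω_κ \ {0})` and `φ = ψ ∘ T κ⁻¹ = ψ ∘ T (1/κ)`,
`min{κ,1/κ} ∫_Ω |∇φ|² ≤ ∫_{Ω_κ} |∇ψ|² ≤ max{κ,1/κ} ∫_Ω |∇φ|²`.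
Here `Ω = {a < |x| < b}` is a ball (`a = 0`) or an annulus (`a > 0`) centered at the
origin and `Ω_κ = T κ ⁻¹' Ω`. -/
theorem stmt8 (κ a b : ℝ) (hκ : 0 < κ) (ha : 0 ≤ a) (hab : a < b)
    (Ω : Set (EuclideanSpace ℝ (Fin 2))) (hΩ : Ω = {x | a < ‖x‖ ∧ ‖x‖ < b})
    (ψ : EuclideanSpace ℝ (Fin 2) → ℝ) (hψ : ContDiff ℝ (⊤ : ℕ∞) ψ)
    (hsupp : tsupport ψ ⊆ (T κ ⁻¹' Ω) \ {0}) :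
    (min κ (1 / κ) * ∫ x in Ω, ‖gradient (ψ ∘ T (1 / κ)) x‖ ^ 2 ≤
      ∫ y in T κ ⁻¹' Ω, ‖gradient ψ y‖ ^ 2) ∧
    ((∫ y in T κ ⁻¹' Ω, ‖gradient ψ y‖ ^ 2) ≤
      max κ (1 / κ) * ∫ x in Ω, ‖gradient (ψ ∘ T (1 / κ)) x‖ ^ 2) := by
  set Ωκ : Set E2 := T κ ⁻¹' Ω with hΩκdef
  have hΩκ : Ωκ = {y : E2 | a < ‖y‖^κ ∧ ‖y‖^κ < b} := by
    ext y
    simp only [hΩκdef, Set.mem_preimage, hΩ, Set.mem_setOf_eq, norm_T κ hκ y]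
  have hyne : ∀ y ∈ Ωκ, y ≠ 0 := by
    intro y hy h0
    rw [hΩκ] at hy
    rw [h0] at hy
    have : a < (0:ℝ) := by
      have := hy.1
      rwa [norm_zero, Real.zero_rpow hκ.ne'] at this
    linarith
  have hopenκ : IsOpen Ωκ := by
    rw [hΩκ]
    have hc : Continuous fun y : E2 => ‖y‖ ^ κ :=
      continuous_norm.rpow_const (fun y => Or.inr hκ.le)
    exact isOpen_Ioo.preimage hc
  have hmeas : MeasurableSet Ωκ := hopenκ.measurableSet
  -- gradient of ψ is continuous, vanishing near 0
  have hgradeq : gradient ψ = fun x => (InnerProductSpace.toDual ℝ E2).symm (fderiv ℝ ψ x) :=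
    rfl
  have hgc : Continuous (gradient ψ) := by
    rw [hgradeq]
    exact (LinearIsometryEquiv.continuous _).comp (hψ.continuous_fderiv (by simp))
  have hopen : IsOpen (tsupport ψ)ᶜ := (isClosed_tsupport ψ).isOpen_compl
  have hgrad0 : ∀ y ∈ (tsupport ψ)ᶜ, gradient ψ y = 0 := by
    intro y hy
    have hψ0 : ψ =ᶠ[nhds y] (fun _ => 0) := by
      filter_upwards [hopen.mem_nhds hy] with z hz
      exact image_eq_zero_of_notMem_tsupport hz
    have hf0 : fderiv ℝ ψ y = 0 := by
      rw [hψ0.fderiv_eq]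
      exact fderiv_const_apply 0
    rw [hgradeq]
    simp only [hf0, map_zero]
  -- the comparison function H
  set G : E2 → ℝ := fun y => ‖gradient ψ y‖^2 with hGdef
  set sf : E2 → ℝ := fun y => (⟪y, gradient ψ y⟫:ℝ)^2 / ‖y‖^2 with hsfdef
  set H : E2 → ℝ := fun y => κ * G y + (1/κ - κ) * sf y with hHdef
  have hGc : Continuous G := (hgc.norm).pow 2
  have hsc : Continuous sf := by
    rw [continuous_iff_continuousAt]
    intro y
    rcases eq_or_ne y 0 with rfl | hy
    · have h0mem : (0:E2) ∈ (tsupport ψ)ᶜ := fun h => (hsupp h).2 rfl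
      have hev : (fun _ => (0:ℝ)) =ᶠ[nhds (0:E2)] sf := by
        filter_upwards [hopen.mem_nhds h0mem] with z hz
        show (0:ℝ) = (⟪z, gradient ψ z⟫:ℝ)^2/‖z‖^2
        rw [hgrad0 z hz]
        simp
      exact continuousAt_const.congr hev
    · have hden : (‖y‖:ℝ)^2 ≠ 0 := pow_ne_zero 2 (norm_ne_zero_iff.2 hy)
      exact (((continuous_id.inner hgc).pow 2).continuousAt).div
        ((continuous_norm.pow 2).continuousAt) hden
  have hHc : Continuous H := (continuous_const.mul hGc).add (continuous_const.mul hsc)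
  -- integrability on Ωκ
  have hsub : Ωκ ⊆ Metric.closedBall (0:E2) (b^(1/κ)) := by
    intro y hy
    rw [hΩκ] at hy
    rw [Metric.mem_closedBall, dist_zero_right]
    calc ‖y‖ = (‖y‖^κ)^(1/κ) := by
          rw [← Real.rpow_mul (norm_nonneg y), mul_one_div, div_self hκ.ne', Real.rpow_one]
      _ ≤ b^(1/κ) := Real.rpow_le_rpow (Real.rpow_nonneg (norm_nonneg y) κ) hy.2.le
          (by positivity)
  have hHint : IntegrableOn H Ωκ :=
    ((hHc.continuousOn).integrableOn_compact (isCompact_closedBall _ _)).mono_set hsub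
  have hGint : IntegrableOn G Ωκ :=
    ((hGc.continuousOn).integrableOn_compact (isCompact_closedBall _ _)).mono_set hsub
  -- change of variables
  have hImg : T κ '' Ωκ = Ω := Set.image_preimage_eq Ω (T_surjective κ hκ)
  have hCoV := integral_image_eq_integral_abs_det_fderiv_smul volume hmeas
      (fun y hy => (hasFDerivAt_T κ y (hyne y hy)).hasFDerivWithinAt)
      ((T_injective κ hκ).injOn) (fun x => ‖gradient (ψ ∘ T (1/κ)) x‖^2)
  rw [hImg] at hCoV
  have hHeq : ∀ y ∈ Ωκ, |(Amap κ y).det| • ‖gradient (ψ ∘ T (1/κ)) (T κ y)‖^2 = H y := by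
    intro y hy
    have hyne' : y ≠ 0 := hyne y hy
    have hxne : T κ y ≠ 0 := by
      intro h
      exact hyne' (T_injective κ hκ (h.trans (T_zero κ).symm))
    have hg2 : gradient (ψ ∘ T (1/κ)) (T κ y) = Amap (1/κ) (T κ y) (gradient ψ y) := by
      have h := (hasGradientAt_comp κ hκ ψ hψ (T κ y) hxne).gradient
      rwa [T_inv κ hκ y] at h
    rw [smul_eq_mul, hg2, key_identity κ hκ y hyne']
  have h1 : (∫ x in Ω, ‖gradient (ψ ∘ T (1/κ)) x‖^2) = ∫ y in Ωκ, H y := by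
    rw [hCoV]
    exact setIntegral_congr_fun hmeas hHeq
  -- pointwise bounds
  have hbounds : ∀ y ∈ Ωκ, min κ (1/κ) * H y ≤ G y ∧ G y ≤ max κ (1/κ) * H y := by
    intro y hy
    have hyne' : y ≠ 0 := hyne y hy
    have hry : (0:ℝ) < ‖y‖ := norm_pos_iff.2 hyne'
    have hs0 : 0 ≤ sf y := by
      simp only [hsfdef]
      positivity
    have hsle : sf y ≤ G y := by
      simp only [hsfdef, hGdef]
      rw [div_le_iff₀ (by positivity)]
      have h1 := abs_real_inner_le_norm y (gradient ψ y)
      nlinarith [sq_abs (⟪y, gradient ψ y⟫:ℝ), abs_nonneg (⟪y, gradient ψ y⟫:ℝ),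
        norm_nonneg (gradient ψ y), norm_nonneg y]
    have hκinv : κ * (1/κ) = 1 := by field_simp
    have hH : H y = κ * G y + (1/κ - κ) * sf y := rfl
    have e1 : κ * (κ*G y + (1/κ-κ)*sf y) = κ^2*G y + (1-κ^2)*sf y := by
      field_simp
    have e2 : (1/κ) * (κ*G y + (1/κ-κ)*sf y) = G y + (1/κ^2 - 1)*sf y := by
      field_simp
    rcases le_total κ 1 with h | h
    · have h1κ : 1 ≤ 1/κ := by rw [le_div_iff₀ hκ]; linarith
      have hmin : min κ (1/κ) = κ := min_eq_left (le_trans h h1κ)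
      have hmax : max κ (1/κ) = 1/κ := max_eq_right (le_trans h h1κ)
      have hsq : 1 ≤ 1/κ^2 := by rw [le_div_iff₀ (by positivity)]; nlinarith
      rw [hmin, hmax, hH]
      constructor
      · rw [e1]
        nlinarith [mul_le_mul_of_nonneg_left hsle (by nlinarith : (0:ℝ) ≤ 1-κ^2)]
      · rw [e2]
        nlinarith [mul_nonneg (by linarith : (0:ℝ) ≤ 1/κ^2 - 1) hs0]
    · have h1κ : 1/κ ≤ 1 := by rw [div_le_one hκ]; linarith
      have hmin : min κ (1/κ) = 1/κ := min_eq_right (le_trans h1κ h)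
      have hmax : max κ (1/κ) = κ := max_eq_left (le_trans h1κ h)
      have hsq : 1/κ^2 ≤ 1 := by rw [div_le_one (by positivity)]; nlinarith
      rw [hmin, hmax, hH]
      constructor
      · rw [e2]
        nlinarith [mul_le_mul_of_nonneg_left hsle (by nlinarith : (0:ℝ) ≤ κ^2-1),
          mul_nonneg (by linarith : (0:ℝ) ≤ 1 - 1/κ^2) hs0]
      · rw [e1]
        nlinarith [mul_le_mul_of_nonneg_left hsle (by nlinarith : (0:ℝ) ≤ κ^2-1)]
  constructor
  · rw [h1, ← integral_const_mul]
    exact setIntegral_mono_on (hHint.const_mul _) hGint hmeas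
      (fun y hy => (hbounds y hy).1)
  · rw [h1, ← integral_const_mul]
    exact setIntegral_mono_on hGint (hHint.const_mul _) hmeas
      (fun y hy => (hbounds y hy).2)
end
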